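/- Let ξ be a Gödel numbering of a language containing a unary exponentiation function symbol exp (interpreted as n ↦ 2^n), and suppose there is a polynomial P such that ξ(A) < 2^{P(|A|)} for all expressions A (|A| the string length). Then there exists a closed term t whose value exceeds its code: ev(t) > ξ(t). Hence ξ is not regular for this language. -/

import Mathlib

/-- Closed terms of a language containing 0, S and a unary exponentiation symbol. -/
inductive ExpTm where
  | zero : ExpTm
  | succ : ExpTm → ExpTm
  | exp : ExpTm → ExpTm
deriving DecidableEq

/-- Evaluation in the standard model, with `exp` interpreted as `n ↦ 2^n`. -/
def ExpTm.eval : ExpTm → ℕ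
  | .zero => 0
  | .succ t => t.eval + 1
  | .exp t => 2 ^ t.eval

/-- String length of a term; applying `exp` adds 3 symbols (so that
`|w(n)| = 3n + 3` for `w(0) = SS0`, `w(n+1) = exp(w(n))`). -/
def ExpTm.len : ExpTm → ℕ
  | .zero => 1
  | .succ t => t.len + 1
  | .exp t => t.len + 3

/-!
The terms `w n = exp^n (SS0)` (`ExpTm.tower n`) have length `3n + 3` but value a tower of
`n + 1` twos. A code bounded by `2 ^ P(|t|)` is exceeded by `ev (w (n+1)) = 2 ^ ev (w n)` as
soon as `P(3n + 6) ≤ ev (w n)`, which holds for large `n` because already `2 ^ n ≤ ev (w n)`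
and polynomials are eventually below `2 ^ n`.
-/

open Filter Asymptotics Polynomial

namespace Polynomial

theorem eval_le_eval_one_mul_pow_natDegree (P : ℕ[X]) {m : ℕ} (hm : 1 ≤ m) :
    P.eval m ≤ P.eval 1 * m ^ P.natDegree := by
  rw [eval_eq_sum_range, eval_eq_sum_range, Finset.sum_mul]
  refine Finset.sum_le_sum fun i hi => ?_
  rw [one_pow, mul_one]
  exact Nat.mul_le_mul_left _ (Nat.pow_le_pow_right hm (Finset.mem_range_succ_iff.mp hi))

theorem eventually_eval_le_two_pow (P : ℕ[X]) : ∀ᶠ m in atTop, P.eval m ≤ 2 ^ m := by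
  have hlittleO : (fun m : ℕ => ((P.eval 1 : ℕ) : ℝ) * (m : ℝ) ^ P.natDegree) =o[atTop]
      fun m => (2 : ℝ) ^ m :=
    (isLittleO_pow_const_const_pow_of_one_lt P.natDegree one_lt_two).const_mul_left _
  filter_upwards [hlittleO.eventuallyLE, eventually_ge_atTop 1] with m hnorm hm
  have hreal : ((P.eval 1 : ℕ) : ℝ) * (m : ℝ) ^ P.natDegree ≤ (2 : ℝ) ^ m := by
    simpa [abs_of_nonneg] using hnorm
  exact (P.eval_le_eval_one_mul_pow_natDegree hm).trans (by exact_mod_cast hreal)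

end Polynomial

namespace ExpTm

def tower : ℕ → ExpTm
  | 0 => .succ (.succ .zero)
  | n + 1 => .exp (tower n)

theorem len_tower (n : ℕ) : (tower n).len = 3 * n + 3 := by
  induction n with
  | zero => rfl
  | succ n ih => simp only [tower, len, ih]; ring

theorem two_pow_le_eval_tower (n : ℕ) : 2 ^ n ≤ (tower n).eval := by
  induction n with
  | zero => decide
  | succ n ih =>
    calc 2 ^ (n + 1) ≤ 2 ^ 2 ^ n := Nat.pow_le_pow_right two_pos Nat.lt_two_pow_self
      _ ≤ (tower (n + 1)).eval := Nat.pow_le_pow_right two_pos ih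

end ExpTm

theorem exp_not_regular_general (ξ : ExpTm → ℕ)
    (P : Polynomial ℕ) (hP : ∀ A : ExpTm, ξ A < 2 ^ P.eval A.len) :
    ∃ t : ExpTm, ξ t < t.eval := by
  obtain ⟨n, hn⟩ := (eventually_eval_le_two_pow (P.comp (3 * X + 6))).exists
  have hlen : P.eval (ExpTm.tower (n + 1)).len = (P.comp (3 * X + 6)).eval n := by
    simp only [ExpTm.len_tower, eval_comp, eval_add, eval_mul, eval_ofNat, eval_X]
    ring_nf
  refine ⟨ExpTm.tower (n + 1), ?_⟩
  calc ξ (ExpTm.tower (n + 1)) < 2 ^ P.eval (ExpTm.tower (n + 1)).len := hP _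
    _ ≤ 2 ^ (ExpTm.tower n).eval :=
      Nat.pow_le_pow_right two_pos (hlen ▸ hn.trans (ExpTm.two_pow_le_eval_tower n))
    _ = (ExpTm.tower (n + 1)).eval := rfl

/-- If a Gödel numbering `ξ` of a language with exponentiation satisfies
`ξ A < 2^(P(|A|))` for some polynomial `P`, then there is a closed term whose value
exceeds its code; hence `ξ` is not regular. -/
theorem exp_not_regular (ξ : ExpTm → ℕ) (hξ : Function.Injective ξ)
    (P : Polynomial ℕ) (hP : ∀ A : ExpTm, ξ A < 2 ^ P.eval A.len) :
    ∃ t : ExpTm, ξ t < t.eval :=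
  exp_not_regular_general ξ P hP
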